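/- Let P, Q : M → B(H) be C² families of orthogonal projections on a manifold M, with ‖P(x) − Q(x)‖ < 1 for all x, and let W(x) be the Kato–Nagy unitary intertwining them. Define the curvature-type 2-forms ω_{jℓ}^P = tr(P [∂_j P, ∂_ℓ P]) and ω_{jℓ}^Q = tr(Q [∂_j Q, ∂_ℓ Q]). Then ω_{jℓ}^Q − ω_{jℓ}^P = ∂_j tr(P W^{−1} ∂_ℓ W) − ∂_ℓ tr(P W^{−1} ∂_j W); in particular ω^Q − ω^P is an exact 2-form. -/

import Mathlib

/-!
Write `A_v = W⁻¹ ∂_v W`. Since `Q = W P W⁻¹`, we get `∂_v Q = W (∂_v P + [A_v, P]) W⁻¹`, so by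
cyclicity of the trace `ω^Q(u, v) = tr (P [∂_u P + [A_u, P], ∂_v P + [A_v, P]])`. Because `∂P` is
off-diagonal with respect to `P` (`∂P = P ∂P + ∂P P`), this expands to
`ω^P(u, v) + tr (∂_u P A_v) - tr (∂_v P A_u) + tr (P [A_v, A_u])`, which is also what
`∂_u tr (P A_v) - ∂_v tr (P A_u)` evaluates to, once `∂_u A_v = -A_u A_v + W⁻¹ ∂_u ∂_v W` and
the symmetry of second derivatives are used.

`W` is invertible, with inverse `(1 - (P - Q)²)^{-1/2} (P Q + (1 - P)(1 - Q))`, because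
`(P Q + (1 - P)(1 - Q)) (Q P + (1 - Q)(1 - P)) = 1 - (P - Q)²` commutes with `P` and `Q`; the
inverse square root is the binomial series, which converges since `‖P - Q‖ < 1`.
-/

open ContinuousLinearMap

/-- Generalized binomial coefficient `x choose n` for real `x`. -/
noncomputable def genBinom' (x : ℝ) (n : ℕ) : ℝ :=
  (∏ i ∈ Finset.range n, (x - i)) / n.factorial

open FormalMultilinearSeries Filter Topology

theorem genBinom'_eq_choose (x : ℝ) (n : ℕ) : genBinom' x n = Ring.choose x n := by
  rw [genBinom', Ring.choose_eq_smul, ← Polynomial.aeval_eq_smeval, Polynomial.aeval_def,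
    Polynomial.eval₂_eq_eval_map, descPochhammer_map, descPochhammer_eval_eq_prod_range,
    smul_eq_mul, div_eq_inv_mul]

theorem ofReal_genBinom'_neg_half (n : ℕ) :
    (genBinom' (-(1 / 2)) n : ℂ) = Ring.choose (-(1 / 2) : ℂ) n := by
  rw [genBinom'_eq_choose, Complex.ofReal_choose]
  push_cast
  rfl

theorem abs_choose_neg_half_le_one (n : ℕ) : |Ring.choose (-(1 / 2) : ℝ) n| ≤ 1 := by
  rw [← genBinom'_eq_choose, genBinom', abs_div, Nat.abs_cast, div_le_one (by positivity),
    Finset.abs_prod, ← Finset.prod_range_add_one_eq_factorial, Nat.cast_prod]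
  refine Finset.prod_le_prod (fun i _ => abs_nonneg _) fun i _ => ?_
  rw [abs_le]
  push_cast
  constructor <;> linarith [(Nat.cast_nonneg i : (0 : ℝ) ≤ i)]

theorem norm_choose_neg_half_le_one (n : ℕ) : ‖Ring.choose (-(1 / 2) : ℂ) n‖ ≤ 1 := by
  rw [← ofReal_genBinom'_neg_half, Complex.norm_real, Real.norm_eq_abs, genBinom'_eq_choose]
  exact abs_choose_neg_half_le_one n

theorem sum_antidiagonal_choose_neg_half_mul (n : ℕ) :
    ∑ ij ∈ Finset.HasAntidiagonal.antidiagonal n,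
      Ring.choose (-(1 / 2) : ℂ) ij.1 * Ring.choose (-(1 / 2) : ℂ) ij.2 = (-1) ^ n := by
  rw [← Ring.add_choose_eq n (Commute.all _ _), show (-(1 / 2) : ℂ) + -(1 / 2) = -1 by norm_num,
    Ring.choose_neg]
  simp [Ring.choose_natCast, Int.negOnePow_def, Units.smul_def]

theorem norm_neg_sub_mul_sub_lt_one {A : Type*} [NormedRing A] {p q : A} (h : ‖p - q‖ < 1) :
    ‖-((p - q) * (p - q))‖ < 1 := by
  rw [norm_neg]
  exact (norm_mul_le _ _).trans_lt (mul_lt_one_of_nonneg_of_lt_one_left (norm_nonneg _) h h.le)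

section InvSqrtOneAdd

variable {A : Type*} [NormedRing A] [NormedAlgebra ℂ A]

theorem one_le_radius_binomialSeries_neg_half :
    1 ≤ (binomialSeries A (-(1 / 2) : ℂ)).radius := by
  refine le_radius_of_bound _ (max 1 ‖binomialSeries A (-(1 / 2) : ℂ) 0‖) fun n => ?_
  rw [NNReal.coe_one, one_pow, mul_one]
  rcases n.eq_zero_or_pos with rfl | hn
  · exact le_max_right _ _
  · exact (ofScalars_norm_le A _ n hn).trans
      ((norm_choose_neg_half_le_one n).trans (le_max_left _ _))

theorem mem_eball_radius_binomialSeries_neg_half {T : A} (hT : ‖T‖ < 1) :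
    T ∈ Metric.eball (0 : A) (binomialSeries A (-(1 / 2) : ℂ)).radius := by
  refine lt_of_lt_of_le ?_ one_le_radius_binomialSeries_neg_half
  rw [edist_zero_right, enorm_eq_nnnorm]
  exact_mod_cast hT

noncomputable def invSqrtOneAdd (T : A) : A := (binomialSeries A (-(1 / 2) : ℂ)).sum T

theorem invSqrtOneAdd_eq_tsum (T : A) :
    invSqrtOneAdd T = ∑' n : ℕ, Ring.choose (-(1 / 2) : ℂ) n • T ^ n :=
  ofScalars_sum_eq _ T

theorem tsum_genBinom'_smul_pow (T : A) :
    ∑' n : ℕ, (genBinom' (-(1 / 2)) n : ℂ) • T ^ n = invSqrtOneAdd T := by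
  simp only [ofReal_genBinom'_neg_half, invSqrtOneAdd_eq_tsum]

theorem Commute.invSqrtOneAdd_right {a T : A} (h : Commute a T) :
    Commute a (invSqrtOneAdd T) := by
  rw [invSqrtOneAdd_eq_tsum]
  exact Commute.tsum_right a fun n => (h.pow_right n).smul_right _

variable [CompleteSpace A]

theorem analyticAt_invSqrtOneAdd {T : A} (hT : ‖T‖ < 1) : AnalyticAt ℂ invSqrtOneAdd T :=
  ((binomialSeries A (-(1 / 2) : ℂ)).hasFPowerSeriesOnBall
    (zero_lt_one.trans_le one_le_radius_binomialSeries_neg_half)).analyticAt_of_mem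
    (mem_eball_radius_binomialSeries_neg_half hT)

theorem invSqrtOneAdd_mul_self_mul_one_add {T : A} (hT : ‖T‖ < 1) :
    invSqrtOneAdd T * invSqrtOneAdd T * (1 + T) = 1 := by
  have hsum : Summable fun n => ‖Ring.choose (-(1 / 2) : ℂ) n • T ^ n‖ := by
    simpa [binomialSeries, ofScalars_apply_eq] using
      (binomialSeries A (-(1 / 2) : ℂ)).summable_norm_apply
        (mem_eball_radius_binomialSeries_neg_half hT)
  -- Cauchy product, with Vandermonde's identity for the coefficients
  have hsq : invSqrtOneAdd T * invSqrtOneAdd T = ∑' n : ℕ, (-T) ^ n := by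
    rw [invSqrtOneAdd_eq_tsum, tsum_mul_tsum_eq_tsum_sum_antidiagonal_of_summable_norm hsum hsum]
    refine tsum_congr fun n => ?_
    rw [← neg_one_smul ℂ T, smul_pow, ← sum_antidiagonal_choose_neg_half_mul, Finset.sum_smul]
    refine Finset.sum_congr rfl fun ij hij => ?_
    rw [smul_mul_smul_comm, ← pow_add, Finset.HasAntidiagonal.mem_antidiagonal.mp hij]
  rw [hsq, ← sub_neg_eq_add]
  exact geom_series_mul_neg (-T) (by rwa [norm_neg])

end InvSqrtOneAdd

section Idempotents

variable {R : Type*} [Ring R] {p q : R}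

theorem IsIdempotentElem.commute_sub_mul_sub (hp : IsIdempotentElem p)
    (hq : IsIdempotentElem q) : Commute p ((p - q) * (p - q)) := by
  have hl : p * ((p - q) * (p - q)) = p * p * p - p * p * q - p * q * p + p * (q * q) := by
    noncomm_ring
  have hr : (p - q) * (p - q) * p = p * p * p - p * q * p - q * (p * p) + q * q * p := by
    noncomm_ring
  rw [Commute, SemiconjBy, hl, hr, hp.eq, hp.eq, hq.eq]
  abel

theorem IsIdempotentElem.mul_add_mul_one_sub_mul_swap (hp : IsIdempotentElem p)
    (hq : IsIdempotentElem q) :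
    (p * q + (1 - p) * (1 - q)) * (q * p + (1 - q) * (1 - p)) = 1 - (p - q) * (p - q) := by
  have e : (p * q + (1 - p) * (1 - q)) * (q * p + (1 - q) * (1 - p))
      = 1 - (p - q) * (p - q) + (p * p - p) + (p * p - p) + (q * q - q)
        + (p * (q * q - q) * p - p * (q * q - q) * (1 - p) - (1 - p) * (q * q - q) * p
          + (1 - p) * (q * q - q) * (1 - p)) := by
    noncomm_ring
  rw [e, hq.eq, hp.eq]
  simp

theorem IsIdempotentElem.mul_mul_add_one_sub_mul (hp : IsIdempotentElem p)
    (hq : IsIdempotentElem q) :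
    q * (q * p + (1 - q) * (1 - p)) = (q * p + (1 - q) * (1 - p)) * p := by
  have hl : q * (q * p + (1 - q) * (1 - p)) = q * q * p + (q - q * q) * (1 - p) := by
    noncomm_ring
  have hr : (q * p + (1 - q) * (1 - p)) * p = q * (p * p) + (1 - q) * (p - p * p) := by
    noncomm_ring
  rw [hl, hr, hp.eq, hq.eq]
  simp

end Idempotents

section KatoNagy

variable {A : Type*} [NormedRing A] [NormedAlgebra ℂ A]

noncomputable def katoNagy (p q : A) : A :=
  invSqrtOneAdd (-((p - q) * (p - q))) * (q * p + (1 - q) * (1 - p))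

theorem mul_katoNagy {p q : A} (hp : IsIdempotentElem p) (hq : IsIdempotentElem q) :
    q * katoNagy p q = katoNagy p q * p := by
  have hqs : Commute q (invSqrtOneAdd (-((p - q) * (p - q)))) := by
    refine Commute.invSqrtOneAdd_right (Commute.neg_right ?_)
    rw [show (p - q) * (p - q) = (q - p) * (q - p) by noncomm_ring]
    exact hq.commute_sub_mul_sub hp
  rw [katoNagy, ← mul_assoc, hqs.eq, mul_assoc, hp.mul_mul_add_one_sub_mul hq, mul_assoc]

variable [CompleteSpace A]

theorem katoNagy_mul_katoNagy {p q : A} (hp : IsIdempotentElem p) (hq : IsIdempotentElem q)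
    (h : ‖p - q‖ < 1) : katoNagy q p * katoNagy p q = 1 := by
  set T := -((p - q) * (p - q))
  have hT : -((q - p) * (q - p)) = T := by simp only [T]; noncomm_ring
  have hcomm : Commute (p * q + (1 - p) * (1 - q)) T := by
    have hpT : Commute p T := (hp.commute_sub_mul_sub hq).neg_right
    have hqT : Commute q T := by
      rw [← hT]
      exact (hq.commute_sub_mul_sub hp).neg_right
    exact (hpT.mul_left hqT).add_left
      (((Commute.one_left T).sub_left hpT).mul_left ((Commute.one_left T).sub_left hqT))
  calc katoNagy q p * katoNagy p q
      = invSqrtOneAdd T * invSqrtOneAdd T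
          * ((p * q + (1 - p) * (1 - q)) * (q * p + (1 - q) * (1 - p))) := by
        rw [katoNagy, katoNagy, hT, mul_assoc, ← mul_assoc _ (invSqrtOneAdd T),
          hcomm.invSqrtOneAdd_right.eq]
        noncomm_ring
    _ = 1 := by
        rw [hp.mul_add_mul_one_sub_mul_swap hq, sub_eq_add_neg]
        exact invSqrtOneAdd_mul_self_mul_one_add (norm_neg_sub_mul_sub_lt_one h)

theorem isUnit_katoNagy {p q : A} (hp : IsIdempotentElem p) (hq : IsIdempotentElem q)
    (h : ‖p - q‖ < 1) : IsUnit (katoNagy p q) :=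
  ⟨⟨katoNagy p q, katoNagy q p, katoNagy_mul_katoNagy hq hp (by rwa [norm_sub_rev]),
    katoNagy_mul_katoNagy hp hq h⟩, rfl⟩

theorem eq_katoNagy_mul_mul_inverse {p q : A} (hp : IsIdempotentElem p)
    (hq : IsIdempotentElem q) (h : ‖p - q‖ < 1) :
    q = katoNagy p q * p * Ring.inverse (katoNagy p q) := by
  rw [← mul_katoNagy hp hq, mul_assoc, Ring.mul_inverse_cancel _ (isUnit_katoNagy hp hq h),
    mul_one]

theorem ContDiffAt.katoNagy {E : Type*} [NormedAddCommGroup E] [NormedSpace ℝ E] {P Q : E → A}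
    {x : E} {n : WithTop ℕ∞} (hP : ContDiffAt ℝ n P x) (hQ : ContDiffAt ℝ n Q x)
    (h : ‖P x - Q x‖ < 1) : ContDiffAt ℝ n (fun y => katoNagy (P y) (Q y)) x :=
  ((analyticAt_invSqrtOneAdd (norm_neg_sub_mul_sub_lt_one h)).restrictScalars.contDiffAt.comp x
    ((hP.sub hQ).mul (hP.sub hQ)).neg).mul
    ((hQ.mul hP).add ((contDiffAt_const.sub hQ).mul (contDiffAt_const.sub hP)))

end KatoNagy

theorem map_mul_mul_self_eq {A S G : Type*} [Semigroup A] [FunLike G A S] {τ : G}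
    (hτ : ∀ a b, τ (a * b) = τ (b * a)) {p : A} (hp : IsIdempotentElem p) (u : A) :
    τ (p * (u * p)) = τ (p * u) := by
  rw [← mul_assoc, hτ, ← mul_assoc, hp.eq]

section TraceIdentities

variable {A S G : Type*} [Ring A] [AddCommGroup S] [FunLike G A S] [AddMonoidHomClass G A S]
  {τ : G} {p : A}

theorem map_mul_lie_lie_eq_of_offDiag (hτ : ∀ a b, τ (a * b) = τ (b * a))
    (hp : IsIdempotentElem p) {x : A} (hx : x = p * x + x * p) (a : A) :
    τ (p * ⁅x, ⁅a, p⁆⁆) = τ (x * a) := by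
  have hpxp : p * x * p = 0 := by
    have h : p * x * p = p * p * x * p + p * x * (p * p) := by
      conv_lhs => rw [hx]
      noncomm_ring
    rw [hp.eq] at h
    simpa using h
  have hpapx : τ (p * (a * p * x)) = 0 := by
    rw [hτ, show a * p * x * p = a * (p * x * p) by noncomm_ring, hpxp, mul_zero, map_zero]
  have e : p * ⁅x, ⁅a, p⁆⁆
      = p * ((x * a) * p) - p * x * p * a - p * (a * p * x) + p * p * a * x := by
    simp only [Ring.lie_def]; noncomm_ring
  calc τ (p * ⁅x, ⁅a, p⁆⁆)
      = τ (p * x * a) + τ (x * p * a) := by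
        rw [e, map_add, map_sub, map_sub, map_mul_mul_self_eq hτ hp, hpxp, zero_mul, map_zero,
          hpapx, hp.eq, hτ (p * a) x]
        simp only [mul_assoc, sub_zero]
    _ = τ ((p * x + x * p) * a) := by rw [add_mul, map_add]
    _ = τ (x * a) := by rw [← hx]

theorem map_mul_lie_lie_lie_lie (hτ : ∀ a b, τ (a * b) = τ (b * a)) (hp : IsIdempotentElem p)
    (a b : A) : τ (p * ⁅⁅a, p⁆, ⁅b, p⁆⁆) = τ (p * ⁅b, a⁆) := by
  have hsq : ∀ a b : A,
      τ (p * (⁅a, p⁆ * ⁅b, p⁆)) = τ (p * (a * (p * b))) - τ (p * (a * b)) := by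
    intro a b
    have e : p * (⁅a, p⁆ * ⁅b, p⁆) = p * ((a * (p * b)) * p) - p * ((a * b) * p)
        + (p * p - p) * (a * (p * b))
        - (p * (a * ((p * p - p) * b)) + (p * p - p) * (a * (b * p))) := by
      simp only [Ring.lie_def]; noncomm_ring
    rw [e, hp.eq, sub_self]
    simp only [zero_mul, mul_zero, add_zero, sub_zero]
    rw [map_sub, map_mul_mul_self_eq hτ hp, map_mul_mul_self_eq hτ hp]
  have hcyc : τ (p * (b * (p * a))) = τ (p * (a * (p * b))) := by
    rw [← mul_assoc, hτ, mul_assoc]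
  rw [Ring.lie_def ⁅a, p⁆, mul_sub, map_sub, hsq, hsq, hcyc, Ring.lie_def, mul_sub, map_sub]
  abel

theorem map_mul_lie_add_lie_sub (hτ : ∀ a b, τ (a * b) = τ (b * a)) (hp : IsIdempotentElem p)
    {dpu dpv : A} (hu : dpu = p * dpu + dpu * p) (hv : dpv = p * dpv + dpv * p) (au av : A) :
    τ (p * ⁅dpu + ⁅au, p⁆, dpv + ⁅av, p⁆⁆) - τ (p * ⁅dpu, dpv⁆)
      = τ (dpu * av) - τ (dpv * au) + τ (p * ⁅av, au⁆) := by
  have e : p * ⁅dpu + ⁅au, p⁆, dpv + ⁅av, p⁆⁆ = p * ⁅dpu, dpv⁆ + p * ⁅dpu, ⁅av, p⁆⁆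
      - p * ⁅dpv, ⁅au, p⁆⁆ + p * ⁅⁅au, p⁆, ⁅av, p⁆⁆ := by
    simp only [Ring.lie_def]; noncomm_ring
  rw [e, map_add, map_sub, map_add, map_mul_lie_lie_eq_of_offDiag hτ hp hu,
    map_mul_lie_lie_eq_of_offDiag hτ hp hv, map_mul_lie_lie_lie_lie hτ hp]
  abel

end TraceIdentities

theorem mul_mul_lie_conj {R : Type*} [Ring R] {a b : R} (h : b * a = 1) (p x y : R) :
    a * p * b * ⁅a * x * b, a * y * b⁆ = a * (p * ⁅x, y⁆) * b := by
  have e : a * p * b * ⁅a * x * b, a * y * b⁆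
      = a * p * (b * a) * x * (b * a) * y * b - a * p * (b * a) * y * (b * a) * x * b := by
    simp only [Ring.lie_def]; noncomm_ring
  rw [e, h]
  simp only [Ring.lie_def]; noncomm_ring

section GaugeTransformation

variable {E A F : Type*} [NormedAddCommGroup E] [NormedSpace ℝ E] [NormedRing A]
  [NormedAlgebra ℝ A] [NormedAddCommGroup F] [NormedSpace ℝ F] {P Q W : E → A} {x : E}

theorem fderiv_mul_apply (hP : DifferentiableAt ℝ P x) (hW : DifferentiableAt ℝ W x) (v : E) :
    fderiv ℝ (fun y => P y * W y) x v = fderiv ℝ P x v * W x + P x * fderiv ℝ W x v := by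
  change fderiv ℝ (P * W) x v = _
  rw [fderiv_mul' hP hW, add_comm]
  rfl

theorem fderiv_apply_eq_of_eventually_isIdempotentElem (hP : DifferentiableAt ℝ P x)
    (hidem : ∀ᶠ y in 𝓝 x, IsIdempotentElem (P y)) (v : E) :
    fderiv ℝ P x v = P x * fderiv ℝ P x v + fderiv ℝ P x v * P x := by
  have h : fderiv ℝ (fun y => P y * P y) x = fderiv ℝ P x := Filter.EventuallyEq.fderiv_eq hidem
  rw [add_comm, ← fderiv_mul_apply hP hP, h]

variable [CompleteSpace A]

theorem fderiv_ringInverse_apply (hW : DifferentiableAt ℝ W x) (hWx : IsUnit (W x)) (v : E) :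
    fderiv ℝ (fun y => Ring.inverse (W y)) x v
      = -(Ring.inverse (W x) * fderiv ℝ W x v * Ring.inverse (W x)) := by
  obtain ⟨w, hw⟩ := hWx
  have h := hasFDerivAt_ringInverse (𝕜 := ℝ) w
  rw [hw] at h
  change fderiv ℝ (Ring.inverse ∘ W) x v = _
  rw [(h.comp x hW.hasFDerivAt).fderiv, ← hw, Ring.inverse_unit]
  simp

theorem fderiv_conj_apply (hP : DifferentiableAt ℝ P x) (hW : DifferentiableAt ℝ W x)
    (hWx : IsUnit (W x)) (hQ : ∀ᶠ y in 𝓝 x, Q y = W y * P y * Ring.inverse (W y)) (v : E) :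
    fderiv ℝ Q x v = W x * (fderiv ℝ P x v + ⁅Ring.inverse (W x) * fderiv ℝ W x v, P x⁆)
      * Ring.inverse (W x) := by
  have hW' : fderiv ℝ W x v = W x * Ring.inverse (W x) * fderiv ℝ W x v := by
    rw [Ring.mul_inverse_cancel _ hWx, one_mul]
  rw [Filter.EventuallyEq.fderiv_eq hQ,
    fderiv_mul_apply (P := fun y => W y * P y) (hW.mul hP) (hW.inverse hWx), fderiv_mul_apply hW hP,
    fderiv_ringInverse_apply hW hWx]
  nth_rewrite 1 [hW']
  simp only [Ring.lie_def]
  noncomm_ring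

noncomputable def traceCurvature (τ : A →L[ℝ] F) (P : E → A) (x u v : E) : F :=
  τ (P x * ⁅fderiv ℝ P x u, fderiv ℝ P x v⁆)

noncomputable def traceConnection (τ : A →L[ℝ] F) (P W : E → A) (v y : E) : F :=
  τ (P y * Ring.inverse (W y) * fderiv ℝ W y v)

theorem fderiv_traceConnection_apply (τ : A →L[ℝ] F) (hP : DifferentiableAt ℝ P x)
    (hW : ContDiffAt ℝ 2 W x) (hWx : IsUnit (W x)) (u v : E) :
    fderiv ℝ (traceConnection τ P W v) x u
      = τ (fderiv ℝ P x u * (Ring.inverse (W x) * fderiv ℝ W x v))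
        - τ (P x * ((Ring.inverse (W x) * fderiv ℝ W x u)
            * (Ring.inverse (W x) * fderiv ℝ W x v)))
        + τ (P x * Ring.inverse (W x) * fderiv ℝ (fderiv ℝ W) x u v) := by
  have hW1 : DifferentiableAt ℝ W x := hW.differentiableAt two_ne_zero
  have hdW : DifferentiableAt ℝ (fderiv ℝ W) x :=
    (hW.fderiv_right (m := 1) (by norm_num)).differentiableAt one_ne_zero
  have hdWv : HasFDerivAt (fun y => fderiv ℝ W y v)
      ((ContinuousLinearMap.apply ℝ A v).comp (fderiv ℝ (fderiv ℝ W) x)) x :=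
    (ContinuousLinearMap.apply ℝ A v).hasFDerivAt.comp x hdW.hasFDerivAt
  have hPWi : DifferentiableAt ℝ (fun y => P y * Ring.inverse (W y)) x := hP.mul (hW1.inverse hWx)
  have hprod : DifferentiableAt ℝ (fun y => P y * Ring.inverse (W y) * fderiv ℝ W y v) x :=
    hPWi.mul hdWv.differentiableAt
  change fderiv ℝ (τ ∘ fun y => P y * Ring.inverse (W y) * fderiv ℝ W y v) x u = _
  rw [(τ.hasFDerivAt.comp x hprod.hasFDerivAt).fderiv, ContinuousLinearMap.coe_comp,
    Function.comp_apply, fderiv_mul_apply hPWi hdWv.differentiableAt,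
    fderiv_mul_apply hP (hW1.inverse hWx), fderiv_ringInverse_apply hW1 hWx, hdWv.fderiv,
    ContinuousLinearMap.coe_comp, Function.comp_apply, ContinuousLinearMap.apply_apply,
    ← map_sub, ← map_add]
  congr 1
  noncomm_ring

theorem traceCurvature_sub_traceCurvature (τ : A →L[ℝ] F)
    (hτ : ∀ a b, τ (a * b) = τ (b * a)) (hP : DifferentiableAt ℝ P x)
    (hPidem : ∀ᶠ y in 𝓝 x, IsIdempotentElem (P y)) (hW : ContDiffAt ℝ 2 W x)
    (hWx : IsUnit (W x)) (hQ : ∀ᶠ y in 𝓝 x, Q y = W y * P y * Ring.inverse (W y)) (u v : E) :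
    traceCurvature τ Q x u v - traceCurvature τ P x u v
      = fderiv ℝ (traceConnection τ P W v) x u - fderiv ℝ (traceConnection τ P W u) x v := by
  have hW1 : DifferentiableAt ℝ W x := hW.differentiableAt two_ne_zero
  set a : E → A := fun w => Ring.inverse (W x) * fderiv ℝ W x w
  have hQx : traceCurvature τ Q x u v
      = τ (P x * ⁅fderiv ℝ P x u + ⁅a u, P x⁆, fderiv ℝ P x v + ⁅a v, P x⁆⁆) := by
    rw [traceCurvature, hQ.self_of_nhds, fderiv_conj_apply hP hW1 hWx hQ,
      fderiv_conj_apply hP hW1 hWx hQ, mul_mul_lie_conj (Ring.inverse_mul_cancel _ hWx), hτ,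
      ← mul_assoc, Ring.inverse_mul_cancel _ hWx, one_mul]
  have hsymm : fderiv ℝ (fderiv ℝ W) x u v = fderiv ℝ (fderiv ℝ W) x v u :=
    hW.isSymmSndFDerivAt (by simp [minSmoothness_of_isRCLikeNormedField]) u v
  rw [hQx, traceCurvature, map_mul_lie_add_lie_sub hτ hPidem.self_of_nhds
      (fderiv_apply_eq_of_eventually_isIdempotentElem hP hPidem u)
      (fderiv_apply_eq_of_eventually_isIdempotentElem hP hPidem v),
    fderiv_traceConnection_apply τ hP hW hWx, fderiv_traceConnection_apply τ hP hW hWx, hsymm,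
    Ring.lie_def, mul_sub, map_sub]
  abel

end GaugeTransformation

/-- Let `P, Q : M → B(H)` be C² families of orthogonal projections on an
open set `M ⊆ ℝ³` of a finite-dimensional Hilbert space `H`, with `‖P(x) - Q(x)‖ < 1`,
and let `W(x)` be the Kato–Nagy unitary intertwining them.  Then, with
`ω^P_{jℓ} = tr(P [∂ⱼP, ∂ₗP])` and similarly for `Q`, one has pointwise on `M`
`ω^Q_{jℓ} - ω^P_{jℓ} = ∂ⱼ tr(P W⁻¹ ∂ₗ W) - ∂ₗ tr(P W⁻¹ ∂ⱼ W)`;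
in particular `ω^Q - ω^P` is exact. -/
theorem curvature_difference_is_exact
    {N : ℕ}
    (M : Set (Fin 3 → ℝ)) (hM : IsOpen M)
    (P Q : (Fin 3 → ℝ) →
      (EuclideanSpace ℂ (Fin N) →L[ℂ] EuclideanSpace ℂ (Fin N)))
    (hPsm : ContDiffOn ℝ 2 P M) (hQsm : ContDiffOn ℝ 2 Q M)
    (hPproj : ∀ x ∈ M, IsIdempotentElem (P x) ∧ IsSelfAdjoint (P x))
    (hQproj : ∀ x ∈ M, IsIdempotentElem (Q x) ∧ IsSelfAdjoint (Q x))
    (hclose : ∀ x ∈ M, ‖P x - Q x‖ < 1)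
    (W : (Fin 3 → ℝ) →
      (EuclideanSpace ℂ (Fin N) →L[ℂ] EuclideanSpace ℂ (Fin N)))
    (hW : ∀ x, W x =
      (∑' n : ℕ, (genBinom' (-(1/2)) n : ℂ) •
          (-((P x - Q x) * (P x - Q x))) ^ n) *
        (Q x * P x + (1 - Q x) * (1 - P x)))
    -- the trace of an endomorphism
    (tr : (EuclideanSpace ℂ (Fin N) →L[ℂ] EuclideanSpace ℂ (Fin N)) → ℂ)
    (htr : ∀ T, tr T = LinearMap.trace ℂ (EuclideanSpace ℂ (Fin N)) (T : _ →ₗ[ℂ] _))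
    -- partial derivatives
    (pd : Fin 3 → ((Fin 3 → ℝ) →
      (EuclideanSpace ℂ (Fin N) →L[ℂ] EuclideanSpace ℂ (Fin N))) →
      (Fin 3 → ℝ) → (EuclideanSpace ℂ (Fin N) →L[ℂ] EuclideanSpace ℂ (Fin N)))
    (hpd : ∀ j F x, pd j F x = fderiv ℝ F x (Pi.single j 1))
    (pdC : Fin 3 → ((Fin 3 → ℝ) → ℂ) → (Fin 3 → ℝ) → ℂ)
    (hpdC : ∀ j f x, pdC j f x = fderiv ℝ f x (Pi.single j 1)) :
    ∀ x ∈ M, ∀ j ℓ : Fin 3,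
      tr (Q x * (pd j Q x * pd ℓ Q x - pd ℓ Q x * pd j Q x)) -
        tr (P x * (pd j P x * pd ℓ P x - pd ℓ P x * pd j P x)) =
      pdC j (fun y => tr (P y * Ring.inverse (W y) * pd ℓ W y)) x -
        pdC ℓ (fun y => tr (P y * Ring.inverse (W y) * pd j W y)) x := by
  intro x hx j ℓ
  set H := EuclideanSpace ℂ (Fin N)
  set τ : (H →L[ℂ] H) →L[ℝ] ℂ := (LinearMap.toContinuousLinearMap
    ((LinearMap.trace ℂ H).comp (ContinuousLinearMap.coeLM ℂ))).restrictScalars ℝ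
  obtain rfl : tr = τ := funext htr
  obtain rfl : W = fun y => katoNagy (P y) (Q y) := funext fun y => by
    rw [hW, tsum_genBinom'_smul_pow]
    rfl
  have hMx : M ∈ 𝓝 x := hM.mem_nhds hx
  have hPidem : ∀ᶠ y in 𝓝 x, IsIdempotentElem (P y) :=
    eventually_of_mem hMx fun y hy => (hPproj y hy).1
  have hQconj : ∀ᶠ y in 𝓝 x,
      Q y = katoNagy (P y) (Q y) * P y * Ring.inverse (katoNagy (P y) (Q y)) :=
    eventually_of_mem hMx fun y hy =>
      eq_katoNagy_mul_mul_inverse (hPproj y hy).1 (hQproj y hy).1 (hclose y hy)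
  have key := traceCurvature_sub_traceCurvature τ
    (fun a b => LinearMap.trace_mul_comm ℂ (a : H →ₗ[ℂ] H) b)
    ((hPsm.contDiffAt hMx).differentiableAt two_ne_zero) hPidem
    ((hPsm.contDiffAt hMx).katoNagy (hQsm.contDiffAt hMx) (hclose x hx))
    (isUnit_katoNagy (hPproj x hx).1 (hQproj x hx).1 (hclose x hx)) hQconj
    (Pi.single j 1) (Pi.single ℓ 1)
  simp only [hpd, hpdC]
  exact key
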